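/- The set of antiderivations of the Leibniz algebra L₃ is a linear subspace of End(V) of dimension 6; explicitly, a linear map D : V → V is an antiderivation of L₃ if and only if D(e₁) lies in the span of e₂, e₃, e₄, D(e₂) lies in the span of e₂, e₃, e₄, and D(e₃) = D(e₄) = 0. -/

import Mathlib

/-- `V = ℂ⁴`. -/
abbrev V : Type := Fin 4 → ℂ

/-- standard basis: `e 0 = e₁`, ..., `e 3 = e₄`. -/
def e (i : Fin 4) : V := Pi.single i 1

/-- Bracket of the Leibniz algebra `L₃`:
`⟦e₁,e₁⟧ = e₃`, `⟦e₂,e₁⟧ = e₃`, `⟦e₃,e₁⟧ = e₄`, all other basis products zero. -/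
def br (x y : V) : V :=
  (x 0 * y 0 + x 1 * y 0) • e 2 + (x 2 * y 0) • e 3

/-- An antiderivation. -/
def IsAntiDer (D : V →ₗ[ℂ] V) : Prop :=
  ∀ x y : V, D (br x y) = br x (D y) - br y (D x)

lemma e_apply (i j : Fin 4) : e i j = if i = j then 1 else 0 := by
  simp [e, Pi.single_apply, eq_comm]

lemma decomp (v : V) : v = v 0 • e 0 + v 1 • e 1 + v 2 • e 2 + v 3 • e 3 := by
  funext j
  fin_cases j <;> simp [e_apply]

lemma key (D : V →ₗ[ℂ] V) :
    IsAntiDer D ↔ (D (e 0)) 0 = 0 ∧ (D (e 1)) 0 = 0 ∧ D (e 2) = 0 ∧ D (e 3) = 0 := by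
  constructor
  · intro h
    have h00 := h (e 0) (e 0)
    have hbr00 : br (e 0) (e 0) = e 2 := by
      funext j; simp [br, e_apply]
    rw [hbr00, sub_self] at h00
    -- h00 : D (e 2) = 0
    have h02 := h (e 0) (e 2)
    have hbr02 : br (e 0) (e 2) = 0 := by funext j; simp [br, e_apply]
    have hbr20 : ∀ v : V, br (e 2) v = v 0 • e 3 := by
      intro v; funext j; simp [br, e_apply]
    rw [hbr02, map_zero, h00, hbr20] at h02
    have hDe00 : (D (e 0)) 0 = 0 := by
      have := congrFun h02 3
      simp [br, e_apply] at this
      linear_combination this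
    have h12 := h (e 1) (e 2)
    have hbr12 : br (e 1) (e 2) = 0 := by funext j; simp [br, e_apply]
    rw [hbr12, map_zero, h00, hbr20] at h12
    have hDe10 : (D (e 1)) 0 = 0 := by
      have := congrFun h12 3
      simp [br, e_apply] at this
      linear_combination this
    have h20 := h (e 2) (e 0)
    have hbr20' : br (e 2) (e 0) = e 3 := by funext j; simp [br, e_apply]
    rw [hbr20', hbr20, hDe00, h00] at h20
    refine ⟨hDe00, hDe10, h00, ?_⟩
    simpa [br, e_apply] using h20
  · rintro ⟨h0, h1, h2, h3⟩
    have hD0 : ∀ y : V, (D y) 0 = 0 := by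
      intro y
      have := decomp y
      rw [this]
      simp [map_add, map_smul, h0, h1, h2, h3]
    intro x y
    have lhs : D (br x y) = 0 := by
      simp [br, map_add, map_smul, h2, h3]
    rw [lhs]
    have rx : br x (D y) = 0 := by
      funext j; simp [br, hD0]
    have ry : br y (D x) = 0 := by
      funext j; simp [br, hD0]
    rw [rx, ry, sub_zero]

lemma mem_span_iff (v : V) :
    v ∈ Submodule.span ℂ {e 1, e 2, e 3} ↔ v 0 = 0 := by
  constructor
  · intro hv
    have hle : Submodule.span ℂ {e 1, e 2, e 3} ≤
        LinearMap.ker (LinearMap.proj (R := ℂ) (φ := fun _ : Fin 4 => ℂ) 0) := by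
      rw [Submodule.span_le]
      rintro x (rfl | rfl | rfl) <;> simp [LinearMap.mem_ker, e_apply]
    simpa using hle hv
  · intro hv
    have : v = v 1 • e 1 + v 2 • e 2 + v 3 • e 3 := by
      conv_lhs => rw [decomp v]
      rw [hv]; simp
    rw [this]
    refine Submodule.add_mem _ (Submodule.add_mem _ ?_ ?_) ?_ <;>
      exact Submodule.smul_mem _ _ (Submodule.subset_span (by simp))

noncomputable def Φ : (V →ₗ[ℂ] V) →ₗ[ℂ] ℂ × ℂ × V × V :=
  ((LinearMap.proj 0).comp (LinearMap.applyₗ (e 0))).prod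
    (((LinearMap.proj 0).comp (LinearMap.applyₗ (e 1))).prod
      ((LinearMap.applyₗ (e 2)).prod (LinearMap.applyₗ (e 3))))

lemma mem_ker_Φ (D : V →ₗ[ℂ] V) :
    D ∈ LinearMap.ker Φ ↔
      (D (e 0)) 0 = 0 ∧ (D (e 1)) 0 = 0 ∧ D (e 2) = 0 ∧ D (e 3) = 0 := by
  simp [Φ, LinearMap.mem_ker, Prod.ext_iff]

lemma Φ_surj : Function.Surjective Φ := by
  rintro ⟨a, b, u, w⟩
  refine ⟨(Pi.basisFun ℂ (Fin 4)).constr ℂ ![a • e 0, b • e 0, u, w], ?_⟩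
  have hb : ∀ i : Fin 4, e i = Pi.basisFun ℂ (Fin 4) i := by
    intro i; funext j; simp [e_apply, Pi.basisFun_apply, Pi.single_apply, eq_comm]
  have hc : ∀ i : Fin 4,
      ((Pi.basisFun ℂ (Fin 4)).constr ℂ ![a • e 0, b • e 0, u, w]) (e i)
        = ![a • e 0, b • e 0, u, w] i := by
    intro i; rw [hb i]; exact (Pi.basisFun ℂ (Fin 4)).constr_basis ℂ _ i
  simp only [Φ, LinearMap.prod_apply, LinearMap.comp_apply,
    LinearMap.proj_apply, Function.prod, Prod.mk.injEq]
  set D := (Pi.basisFun ℂ (Fin 4)).constr ℂ ![a • e 0, b • e 0, u, w] with hD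
  refine ⟨?_, ?_, ?_, ?_⟩
  · show D (e 0) 0 = a
    rw [hc 0]; simp [e_apply]
  · show D (e 1) 0 = b
    rw [hc 1]; simp [e_apply]
  · show D (e 2) = u
    rw [hc 2]; simp
  · show D (e 3) = w
    rw [hc 3]; simp

theorem antiderivations_of_L3 :
    (∃ S : Submodule ℂ (V →ₗ[ℂ] V),
      (S : Set (V →ₗ[ℂ] V)) = {D | IsAntiDer D} ∧ Module.finrank ℂ S = 6) ∧
    (∀ D : V →ₗ[ℂ] V, IsAntiDer D ↔
      D (e 0) ∈ Submodule.span ℂ {e 1, e 2, e 3} ∧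
      D (e 1) ∈ Submodule.span ℂ {e 1, e 2, e 3} ∧
      D (e 2) = 0 ∧ D (e 3) = 0) := by
  constructor
  · refine ⟨LinearMap.ker Φ, ?_, ?_⟩
    · ext D
      simp only [SetLike.mem_coe, Set.mem_setOf_eq, mem_ker_Φ, key]
    · have h1 := LinearMap.finrank_range_add_finrank_ker Φ
      have h2 : LinearMap.range Φ = ⊤ := LinearMap.range_eq_top_of_surjective Φ Φ_surj
      rw [h2] at h1
      have h3 : Module.finrank ℂ (⊤ : Submodule ℂ (ℂ × ℂ × V × V)) = 10 := by
        rw [finrank_top]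
        simp [Module.finrank_prod]
      have h4 : Module.finrank ℂ (V →ₗ[ℂ] V) = 16 := by
        simp [Module.finrank_linearMap]
      omega
  · intro D
    rw [key, mem_span_iff, mem_span_iff]
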